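/- Let A be an alphabet with independence relation θ and B ⊆ A, Z = A − B. If z, z' ∈ Z with (z,z') ∈ θ and the dependence graph contains a path z − c₁ − ⋯ − c_m − z' with all cᵢ ∈ B (induced, i.e. of minimal length), then letting k be the smallest index with (c_{k+1}, z') ∉ θ, one has the equality of traces z c₁⋯c_k · z' c_{k+1}⋯c_m = z' · z c₁⋯c_m in M(A,θ), with z c₁⋯c_k, z' c_{k+1}⋯c_m, z', z c₁⋯c_m all elements of β_Z(B). -/

import Mathlib

namespace PCM

variable {A : Type*}

/-- Elementary commutation relation on words. -/
def TraceRel (θ : A → A → Prop) : FreeMonoid A → FreeMonoid A → Prop :=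
  fun x y => ∃ a b, θ a b ∧ x = FreeMonoid.of a * FreeMonoid.of b ∧
    y = FreeMonoid.of b * FreeMonoid.of a

/-- The congruence generated by the commutations. -/
def traceCon (θ : A → A → Prop) : Con (FreeMonoid A) := conGen (TraceRel θ)

/-- The free partially commutative (trace) monoid `M(A,θ)`. -/
abbrev Trace (A : Type*) (θ : A → A → Prop) := (traceCon θ).Quotient

/-- Canonical projection from words to traces. -/
def trMk (θ : A → A → Prop) : FreeMonoid A →* Trace A θ := (traceCon θ).mk'

/-- The trace of a single letter. -/
def trOf (θ : A → A → Prop) (a : A) : Trace A θ := trMk θ (FreeMonoid.of a)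

/-- `IA t` : the set of possible initial letters of a trace. -/
def IA (θ : A → A → Prop) (t : Trace A θ) : Set A := {a | ∃ w, t = trOf θ a * w}

/-- The alphabet of a trace. -/
def Alph (θ : A → A → Prop) (t : Trace A θ) : Set A :=
  {a | ∃ l : List A, trMk θ (FreeMonoid.ofList l) = t ∧ a ∈ l}

/-- The submonoid `M(B,θ_B)` generated by a subalphabet. -/
def subTr (θ : A → A → Prop) (B : Set A) : Submonoid (Trace A θ) :=
  Submonoid.closure (trOf θ '' B)

/-- `β_Z(B)` where `Z = A - B`. -/
def beta (θ : A → A → Prop) (B : Set A) : Set (Trace A θ) :=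
  {t | ∃ z, z ∉ B ∧ ∃ w ∈ subTr θ B, t = trOf θ z * w ∧ IA θ t = {z}}

/-- The induced independence relation `θ_X` on a set of traces. -/
def thetaX (θ : A → A → Prop) (X : Set (Trace A θ)) (x y : X) : Prop :=
  ∀ a ∈ Alph θ (x : Trace A θ), ∀ b ∈ Alph θ (y : Trace A θ), θ a b

/-- `X` is a partially commutative code : the canonical morphism from
`M(X,θ_X)` is injective. -/
def IsPCCode (θ : A → A → Prop) (X : Set (Trace A θ)) : Prop :=
  ∃ f : Trace X (thetaX θ X) →* Trace A θ,
    (∀ x : X, f (trOf (thetaX θ X) x) = (x : Trace A θ)) ∧ Function.Injective f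

/-- Dependence relation (edges of the dependence graph). -/
def dep (θ : A → A → Prop) (a b : A) : Prop := a ≠ b ∧ ¬ θ a b

/-- A path `z - b₁ - ⋯ - bₙ - z'` in the dependence graph with inner vertices in `B`. -/
def DepPathB (θ : A → A → Prop) (B : Set A) (z z' : A) : Prop :=
  ∃ l : List A, (∀ b ∈ l, b ∈ B) ∧ List.Chain (dep θ) z (l ++ [z'])

/-- `B` is a transitively factorizing subalphabet. -/
def IsTFSA (θ : A → A → Prop) (B : Set A) : Prop :=
  ∀ z z', z ∉ B → z' ∉ B → θ z z' → ¬ DepPathB θ B z z'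

/-- `a` can be the first letter of (a representative of) the word `l`. -/
def CanStart (θ : A → A → Prop) (a : A) (l : List A) : Prop :=
  ∃ p s, l = p ++ a :: s ∧ ∀ b ∈ p, θ b a

lemma canStart_nil {θ : A → A → Prop} {a : A} : ¬ CanStart θ a ([] : List A) := by
  rintro ⟨p, s, h, -⟩; cases p <;> simp at h

lemma canStart_cons {θ : A → A → Prop} {a c : A} {l : List A} :
    CanStart θ a (c :: l) ↔ a = c ∨ (θ c a ∧ CanStart θ a l) := by
  constructor
  · rintro ⟨p, s, h, hp⟩
    cases p with
    | nil => left; exact (List.cons.injEq _ _ _ _ ▸ h).1.symm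
    | cons b p' =>
      obtain ⟨rfl, h'⟩ := List.cons.injEq _ _ _ _ ▸ h
      exact Or.inr ⟨hp _ (List.mem_cons_self), p', s, h', fun x hx => hp x (List.mem_cons_of_mem _ hx)⟩
  · rintro (rfl | ⟨hca, p, s, rfl, hp⟩)
    · exact ⟨[], l, rfl, by simp⟩
    · exact ⟨c :: p, s, rfl, by
        intro b hb
        rcases List.mem_cons.mp hb with rfl | hb
        · exact hca
        · exact hp _ hb⟩

lemma canStart_append {θ : A → A → Prop} {a : A} {l₁ l₂ : List A} :
    CanStart θ a (l₁ ++ l₂) ↔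
      CanStart θ a l₁ ∨ (CanStart θ a l₂ ∧ ∀ b ∈ l₁, θ b a) := by
  induction l₁ with
  | nil => simp [canStart_nil]
  | cons c t ih =>
    simp only [List.cons_append, canStart_cons, ih, List.mem_cons]
    constructor
    · rintro (rfl | ⟨h1, h2 | ⟨h2, h3⟩⟩)
      · exact Or.inl (Or.inl rfl)
      · exact Or.inl (Or.inr ⟨h1, h2⟩)
      · refine Or.inr ⟨h2, fun b hb => ?_⟩
        rcases hb with rfl | hb
        · exact h1
        · exact h3 _ hb
    · rintro ((rfl | ⟨h1, h2⟩) | ⟨h1, h2⟩)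
      · exact Or.inl rfl
      · exact Or.inr ⟨h1, Or.inl h2⟩
      · exact Or.inr ⟨h2 _ (Or.inl rfl), Or.inr ⟨h1, fun b hb => h2 _ (Or.inr hb)⟩⟩

/-- The congruence of "same letters and same possible initial letters". -/
def goodCon (θ : A → A → Prop) : Con (FreeMonoid A) where
  r u v := List.Perm (FreeMonoid.toList u) (FreeMonoid.toList v) ∧
    ∀ a, CanStart θ a (FreeMonoid.toList u) ↔ CanStart θ a (FreeMonoid.toList v)
  iseqv := ⟨fun _ => ⟨List.Perm.refl _, fun _ => Iff.rfl⟩,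
    fun h => ⟨h.1.symm, fun a => (h.2 a).symm⟩,
    fun h h' => ⟨h.1.trans h'.1, fun a => (h.2 a).trans (h'.2 a)⟩⟩
  mul' := by
    rintro u v x y ⟨h1, h2⟩ ⟨h3, h4⟩
    refine ⟨by rw [FreeMonoid.toList_mul, FreeMonoid.toList_mul]; exact h1.append h3,
      fun a => ?_⟩
    rw [FreeMonoid.toList_mul, FreeMonoid.toList_mul, canStart_append, canStart_append]
    have hmem : ∀ b, b ∈ FreeMonoid.toList u ↔ b ∈ FreeMonoid.toList v :=
      fun b => h1.mem_iff
    constructor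
    · rintro (h | ⟨h, h'⟩)
      · exact Or.inl ((h2 a).mp h)
      · exact Or.inr ⟨(h4 a).mp h, fun b hb => h' b ((hmem b).mpr hb)⟩
    · rintro (h | ⟨h, h'⟩)
      · exact Or.inl ((h2 a).mpr h)
      · exact Or.inr ⟨(h4 a).mpr h, fun b hb => h' b ((hmem b).mp hb)⟩

lemma traceCon_le_good (θ : A → A → Prop) (hsymm : ∀ a b, θ a b → θ b a) :
    traceCon θ ≤ goodCon θ := by
  apply Con.conGen_le.mpr
  rintro x y ⟨a, b, hab, rfl, rfl⟩
  have hx : FreeMonoid.toList (FreeMonoid.of a * FreeMonoid.of b) = [a, b] := rfl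
  have hy : FreeMonoid.toList (FreeMonoid.of b * FreeMonoid.of a) = [b, a] := rfl
  refine ⟨by rw [hx, hy]; exact List.Perm.swap b a [], fun c => ?_⟩
  rw [hx, hy]
  simp only [canStart_cons, canStart_nil, and_false, or_false]
  constructor
  · rintro (rfl | ⟨h, rfl⟩)
    · exact Or.inr ⟨hsymm _ _ hab, rfl⟩
    · exact Or.inl rfl
  · rintro (rfl | ⟨h, rfl⟩)
    · exact Or.inr ⟨hab, rfl⟩
    · exact Or.inl rfl

lemma trMk_eq_iff {θ : A → A → Prop} {u v : FreeMonoid A} :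
    trMk θ u = trMk θ v ↔ traceCon θ u v := Con.eq _

lemma traceCon_shift (θ : A → A → Prop) (a : A) :
    ∀ (p : List A) (s : List A), (∀ b ∈ p, θ b a) →
      traceCon θ (FreeMonoid.ofList (p ++ a :: s)) (FreeMonoid.ofList (a :: (p ++ s))) := by
  intro p
  induction p with
  | nil => intro s _; exact (traceCon θ).refl _
  | cons c p' ih =>
    intro s hp
    have h1 : traceCon θ (FreeMonoid.ofList (p' ++ a :: s))
        (FreeMonoid.ofList (a :: (p' ++ s))) :=
      ih s (fun b hb => hp b (List.mem_cons_of_mem _ hb))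
    have h2 : traceCon θ (FreeMonoid.of c * FreeMonoid.ofList (p' ++ a :: s))
        (FreeMonoid.of c * FreeMonoid.ofList (a :: (p' ++ s))) :=
      (traceCon θ).mul ((traceCon θ).refl _) h1
    have h3 : traceCon θ (FreeMonoid.of c * FreeMonoid.of a)
        (FreeMonoid.of a * FreeMonoid.of c) :=
      ConGen.Rel.of _ _ ⟨c, a, hp c (List.mem_cons_self), rfl, rfl⟩
    have h4 : traceCon θ
        ((FreeMonoid.of c * FreeMonoid.of a) * FreeMonoid.ofList (p' ++ s))
        ((FreeMonoid.of a * FreeMonoid.of c) * FreeMonoid.ofList (p' ++ s)) :=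
      (traceCon θ).mul h3 ((traceCon θ).refl _)
    have e1 : FreeMonoid.ofList ((c :: p') ++ a :: s) =
        FreeMonoid.of c * FreeMonoid.ofList (p' ++ a :: s) := rfl
    have e2 : FreeMonoid.of c * FreeMonoid.ofList (a :: (p' ++ s)) =
        (FreeMonoid.of c * FreeMonoid.of a) * FreeMonoid.ofList (p' ++ s) := by
      rw [FreeMonoid.ofList_cons, mul_assoc]
    have e3 : (FreeMonoid.of a * FreeMonoid.of c) * FreeMonoid.ofList (p' ++ s) =
        FreeMonoid.ofList (a :: ((c :: p') ++ s)) := by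
      rw [FreeMonoid.ofList_cons, List.cons_append, FreeMonoid.ofList_cons, mul_assoc]
    rw [e1, ← e3]
    exact (traceCon θ).trans h2 (e2 ▸ h4)

lemma mem_IA_iff {θ : A → A → Prop} (hsymm : ∀ a b, θ a b → θ b a)
    {l : List A} {a : A} :
    a ∈ IA θ (trMk θ (FreeMonoid.ofList l)) ↔ CanStart θ a l := by
  constructor
  · rintro ⟨w, hw⟩
    obtain ⟨w', rfl⟩ := Con.mk'_surjective w
    have hw' : trMk θ (FreeMonoid.ofList l) = trMk θ (FreeMonoid.of a * w') := by
      rw [map_mul]; exact hw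
    have hrel := traceCon_le_good θ hsymm (trMk_eq_iff.mp hw')
    have : CanStart θ a (FreeMonoid.toList (FreeMonoid.of a * w')) :=
      ⟨[], FreeMonoid.toList w', rfl, by simp⟩
    exact (hrel.2 a).mpr this
  · rintro ⟨p, s, rfl, hp⟩
    refine ⟨trMk θ (FreeMonoid.ofList (p ++ s)), ?_⟩
    have : trOf θ a * trMk θ (FreeMonoid.ofList (p ++ s)) =
        trMk θ (FreeMonoid.ofList (a :: (p ++ s))) := by
      rw [trOf, ← map_mul, FreeMonoid.ofList_cons]
    rw [this]
    exact trMk_eq_iff.mpr (traceCon_shift θ a p s hp)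

lemma canStart_of_chain {θ : A → A → Prop} {z a : A} {l : List A}
    (h : List.Chain (dep θ) z l) (hc : CanStart θ a (z :: l)) : a = z := by
  induction l generalizing z with
  | nil =>
    rcases canStart_cons.mp hc with rfl | ⟨-, h'⟩
    · rfl
    · exact absurd h' canStart_nil
  | cons d l ih =>
    obtain ⟨hd, htl⟩ := List.chain_cons.mp h
    rcases canStart_cons.mp hc with rfl | ⟨hza, h'⟩
    · rfl
    · have : a = d := ih htl h'
      subst this
      exact absurd hza hd.2

lemma IA_chain {θ : A → A → Prop} (hsymm : ∀ a b, θ a b → θ b a) {z : A} {l : List A}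
    (h : List.Chain (dep θ) z l) :
    IA θ (trMk θ (FreeMonoid.ofList (z :: l))) = {z} := by
  ext a
  rw [Set.mem_singleton_iff, mem_IA_iff hsymm]
  constructor
  · exact canStart_of_chain h
  · rintro rfl; exact ⟨[], l, rfl, by simp⟩

lemma chain_of_append {R : A → A → Prop} {z : A} {l₁ l₂ : List A}
    (h : List.Chain R z (l₁ ++ l₂)) : List.Chain R z l₁ := by
  induction l₁ generalizing z with
  | nil => exact List.Chain.nil
  | cons c t ih =>
    obtain ⟨h1, h2⟩ := List.chain_cons.mp h
    exact List.chain_cons.mpr ⟨h1, ih h2⟩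

lemma ofList_mem_subTr {θ : A → A → Prop} {B : Set A} :
    ∀ {l : List A}, (∀ c ∈ l, c ∈ B) → trMk θ (FreeMonoid.ofList l) ∈ subTr θ B := by
  intro l
  induction l with
  | nil => intro _; exact (by simpa using (subTr θ B).one_mem)
  | cons c t ih =>
    intro h
    rw [FreeMonoid.ofList_cons, map_mul]
    exact mul_mem (Submonoid.subset_closure ⟨c, h c (List.mem_cons_self), rfl⟩)
      (ih fun x hx => h x (List.mem_cons_of_mem _ hx))

lemma mem_beta_of_chain {θ : A → A → Prop} (hsymm : ∀ a b, θ a b → θ b a) {B : Set A}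
    {z : A} {l : List A} (hz : z ∉ B) (hl : ∀ c ∈ l, c ∈ B)
    (hch : List.Chain (dep θ) z l) :
    trMk θ (FreeMonoid.ofList (z :: l)) ∈ beta θ B := by
  refine ⟨z, hz, trMk θ (FreeMonoid.ofList l), ofList_mem_subTr hl, ?_, IA_chain hsymm hch⟩
  rw [FreeMonoid.ofList_cons, map_mul]; rfl

end PCM

open PCM in
/-- from an induced dependence path `z - c₁ - ⋯ - c_m - z'` through `B`
one obtains the trace identity `z c₁⋯c_k · z' c_{k+1}⋯c_m = z' · z c₁⋯c_m`, all four
factors being elements of `β_Z(B)`. -/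
theorem stmt_4 {A : Type*} (θ : A → A → Prop)
    (hanti : ∀ a, ¬ θ a a) (hsymm : ∀ a b, θ a b → θ b a) (B : Set A)
    (z z' : A) (hz : z ∉ B) (hz' : z' ∉ B) (hθ : θ z z')
    (cs : List A) (hcs : ∀ c ∈ cs, c ∈ B)
    (hchain : List.Chain (dep θ) z (cs ++ [z']))
    (hinduced : ∀ i j : ℕ, i + 1 < j → j < (z :: (cs ++ [z'])).length →
      θ ((z :: (cs ++ [z'])).getD i z) ((z :: (cs ++ [z'])).getD j z))
    (k : ℕ) (hk : k < cs.length)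
    (hkmin : ∀ i < k, θ (cs.getD i z) z')
    (hknot : ¬ θ (cs.getD k z) z') :
    trMk θ (FreeMonoid.ofList (z :: cs.take k)) *
        trMk θ (FreeMonoid.ofList (z' :: cs.drop k)) =
      trOf θ z' * trMk θ (FreeMonoid.ofList (z :: cs)) ∧
    trMk θ (FreeMonoid.ofList (z :: cs.take k)) ∈ beta θ B ∧
    trMk θ (FreeMonoid.ofList (z' :: cs.drop k)) ∈ beta θ B ∧
    trOf θ z' ∈ beta θ B ∧
    trMk θ (FreeMonoid.ofList (z :: cs)) ∈ beta θ B := by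
  clear hanti hinduced
  have hdrop : cs.drop k = cs[k] :: cs.drop (k + 1) := List.drop_eq_getElem_cons hk
  have hgetD : cs.getD k z = cs[k] := List.getD_eq_getElem cs z hk
  have ckB : cs[k] ∈ B := hcs _ (List.getElem_mem hk)
  have ch_cs : List.Chain (dep θ) z cs := chain_of_append hchain
  have ch_take : List.Chain (dep θ) z (cs.take k) := by
    have h := ch_cs
    rw [← List.take_append_drop k cs] at h
    exact chain_of_append h
  have ch_tail : List.Chain (dep θ) cs[k] (cs.drop (k + 1)) := by
    have h := ch_cs
    rw [← List.take_append_drop k cs, hdrop] at h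
    exact (List.isChain_cons_split.mp h).2
  have hdep : dep θ z' cs[k] := by
    refine ⟨fun he => hz' (he ▸ ckB), fun h => hknot (hgetD ▸ hsymm _ _ h)⟩
  have ch_drop : List.Chain (dep θ) z' (cs.drop k) := by
    rw [hdrop]; exact List.chain_cons.mpr ⟨hdep, ch_tail⟩
  have htakeθ : ∀ b ∈ z :: cs.take k, θ b z' := by
    intro b hb
    rcases List.mem_cons.mp hb with rfl | hb
    · exact hθ
    · obtain ⟨i, hi, hbe⟩ := List.getElem_of_mem hb
      have hik : i < k := by
        have h := hi; rw [List.length_take] at h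
        exact lt_of_lt_of_le h (min_le_left _ _)
      have hic : i < cs.length := by
        have h := hi; rw [List.length_take] at h
        exact lt_of_lt_of_le h (min_le_right _ _)
      have ht : (cs.take k)[i] = cs[i]'hic := by simp
      rw [← hbe, ht, ← List.getD_eq_getElem cs z hic]
      exact hkmin i hik
  have hid : trMk θ (FreeMonoid.ofList (z :: cs.take k)) *
      trMk θ (FreeMonoid.ofList (z' :: cs.drop k)) =
      trOf θ z' * trMk θ (FreeMonoid.ofList (z :: cs)) := by
    have e1 : trMk θ (FreeMonoid.ofList (z :: cs.take k)) *
        trMk θ (FreeMonoid.ofList (z' :: cs.drop k)) =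
        trMk θ (FreeMonoid.ofList ((z :: cs.take k) ++ z' :: cs.drop k)) := by
      rw [FreeMonoid.ofList_append, map_mul]
    have e2 : trOf θ z' * trMk θ (FreeMonoid.ofList (z :: cs)) =
        trMk θ (FreeMonoid.ofList (z' :: (z :: cs))) := by
      rw [FreeMonoid.ofList_cons, map_mul]; rfl
    have e3 := trMk_eq_iff.mpr (traceCon_shift θ z' (z :: cs.take k) (cs.drop k) htakeθ)
    rw [e1, e2, e3, List.cons_append, List.take_append_drop]
  refine ⟨hid,
    mem_beta_of_chain hsymm hz (fun c hc => hcs c (List.mem_of_mem_take hc)) ch_take,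
    mem_beta_of_chain hsymm hz' (fun c hc => hcs c (List.mem_of_mem_drop hc)) ch_drop,
    ?_,
    mem_beta_of_chain hsymm hz hcs ch_cs⟩
  have e : trOf θ z' = trMk θ (FreeMonoid.ofList [z']) := rfl
  rw [e]
  exact mem_beta_of_chain hsymm hz' (by simp) List.Chain.nil
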